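/- arXiv:2008.03887 — 4 statements merged into one kernel-verified Lean document; each statement's English description precedes it below -/
import Mathlib

section
/- Let G = K_{n_1} × K_{n_2} × ... × K_{n_t} be a direct product of complete graphs with t ≥ 3 and n_i ≥ t+1 for all i. Then the domination number and total domination number of G both equal t+1. -/
set_option linter.unusedVariables false
set_option linter.unnecessarySeqFocus false

open SimpleGraph

variable {V : Type*} {W : Type*}

/-- The direct (tensor) product of two simple graphs. -/
def SimpleGraph.tensor (G : SimpleGraph V) (H : SimpleGraph W) : SimpleGraph (V × W) where
  Adj p q := G.Adj p.1 q.1 ∧ H.Adj p.2 q.2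
  symm := ⟨fun p q h => ⟨h.1.symm, h.2.symm⟩⟩
  loopless := ⟨fun p h => G.irrefl h.1⟩

/-- A dominating set: every vertex is in `D` or adjacent to a member of `D`. -/
def SimpleGraph.Dominating (G : SimpleGraph V) (D : Set V) : Prop :=
  ∀ v, ∃ u ∈ D, u = v ∨ G.Adj u v

/-- The domination number. -/
noncomputable def SimpleGraph.domNum (G : SimpleGraph V) : ℕ :=
  sInf {n | ∃ D : Set V, G.Dominating D ∧ D.ncard = n}

/-- A total dominating set. -/
def SimpleGraph.TotalDominating (G : SimpleGraph V) (D : Set V) : Prop :=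
  ∀ v, ∃ u ∈ D, G.Adj u v

/-- The total domination number. -/
noncomputable def SimpleGraph.totalDomNum (G : SimpleGraph V) : ℕ :=
  sInf {n | ∃ D : Set V, G.TotalDominating D ∧ D.ncard = n}

/-- A paired dominating set: dominating and the induced subgraph has a perfect matching. -/
def SimpleGraph.PairedDominating (G : SimpleGraph V) (D : Set V) : Prop :=
  G.Dominating D ∧ ∃ M : (G.induce D).Subgraph, M.IsPerfectMatching

/-- The paired domination number. -/
noncomputable def SimpleGraph.pairedDomNum (G : SimpleGraph V) : ℕ :=
  sInf {n | ∃ D : Set V, G.PairedDominating D ∧ D.ncard = n}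

/-- A 3-packing: vertices pairwise at distance greater than 3. -/
def SimpleGraph.Packing3 (G : SimpleGraph V) (P : Set V) : Prop :=
  P.Pairwise fun u v => ¬G.Reachable u v ∨ 3 < G.dist u v

/-- The 3-packing number. -/
noncomputable def SimpleGraph.packNum3 (G : SimpleGraph V) : ℕ :=
  sSup {n | ∃ P : Set V, G.Packing3 P ∧ P.ncard = n}

/-- A minimal dominating set. -/
def SimpleGraph.MinimalDominating (G : SimpleGraph V) (D : Set V) : Prop :=
  G.Dominating D ∧ ∀ D' ⊆ D, G.Dominating D' → D' = D

/-- The upper domination number. -/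
noncomputable def SimpleGraph.upperDomNum (G : SimpleGraph V) : ℕ :=
  sSup {n | ∃ D : Set V, G.MinimalDominating D ∧ D.ncard = n}

/-- `G` has no isolated vertices. -/
def SimpleGraph.NoIsolated (G : SimpleGraph V) : Prop := ∀ v, ∃ u, G.Adj u v

/-- Direct product of complete graphs `K_{n 0} × ... × K_{n (t-1)}`:
tuples adjacent iff they differ in every coordinate. -/
def prodCompleteGraphs {t : ℕ} (n : Fin t → ℕ) : SimpleGraph (∀ i, Fin (n i)) where
  Adj a b := a ≠ b ∧ ∀ i, a i ≠ b i
  symm := ⟨fun a b h => ⟨h.1.symm, fun i => (h.2 i).symm⟩⟩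
  loopless := ⟨fun a h => h.1 rfl⟩

/-- `G` together with a new pendant vertex (`none`) attached to `v`. -/
def addPendant (G : SimpleGraph V) (v : V) : SimpleGraph (Option V) where
  Adj x y :=
    match x, y with
    | some a, some b => G.Adj a b
    | some a, none => a = v
    | none, some b => b = v
    | none, none => False
  symm := by
    constructor
    rintro (_ | a) (_ | b) h <;> simp_all [SimpleGraph.adj_comm]
  loopless := by
    constructor
    rintro (_ | a) h <;> simp_all

/-- `G` with a path on `ℓ` vertices appended to vertex `u` via a bridge. -/
def appendPath (G : SimpleGraph V) (u : V) (ℓ : ℕ) : SimpleGraph (V ⊕ Fin ℓ) where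
  Adj x y :=
    match x, y with
    | Sum.inl a, Sum.inl b => G.Adj a b
    | Sum.inl a, Sum.inr j => a = u ∧ (j : ℕ) = 0
    | Sum.inr i, Sum.inl b => b = u ∧ (i : ℕ) = 0
    | Sum.inr i, Sum.inr j => (i : ℕ) + 1 = j ∨ (j : ℕ) + 1 = i
  symm := by
    constructor
    rintro (a | i) (b | j) h <;> simp_all [SimpleGraph.adj_comm] <;> tauto
  loopless := by
    constructor
    rintro (a | i) h <;> simp_all

/-- `G` with a pendant path on two vertices `(v,1)–(v,2)` attached to each vertex `(v,0)`. -/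
def attachPaths2 (G : SimpleGraph V) : SimpleGraph (V × Fin 3) where
  Adj p q :=
    (p.2 = 0 ∧ q.2 = 0 ∧ G.Adj p.1 q.1) ∨
    (p.1 = q.1 ∧ ((p.2 = 0 ∧ q.2 = 1) ∨ (p.2 = 1 ∧ q.2 = 0) ∨
      (p.2 = 1 ∧ q.2 = 2) ∨ (p.2 = 2 ∧ q.2 = 1)))
  symm := by
    constructor
    rintro ⟨a, i⟩ ⟨b, j⟩ h <;> simp_all [SimpleGraph.adj_comm] <;> tauto
  loopless := by
    constructor
    rintro ⟨a, i⟩ h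
    rcases h with ⟨-, -, h⟩ | ⟨-, h⟩
    · exact G.irrefl h
    · rcases h with ⟨h1, h2⟩ | ⟨h1, h2⟩ | ⟨h1, h2⟩ | ⟨h1, h2⟩ <;> simp_all

/-!
The `t + 1` constant tuples `(k, …, k)`, `k ≤ t`, totally dominate: a vertex has only `t`
coordinates, so it misses some value `k`, and then it differs from `(k, …, k)` everywhere.

Conversely, list any `t` vertices as `u 0, …, u (t-1)` and form the diagonal tuple
`v i = u i i`, which agrees with each `u j` in coordinate `j`. If `v` is none of the `u j`, it is
undominated. If `v = u j₀`, change coordinate `j₀` of `v` to a value missed by all the `u j`: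
the new tuple still agrees with `u j` in coordinate `j` for `j ≠ j₀`, and with `u j₀` in any
other coordinate.
-/

lemma exists_lt_forall_ne {t m : ℕ} (f : Fin t → ℕ) (h : t < m) : ∃ k < m, ∀ i, f i ≠ k := by
  have hcard : (Finset.univ.image f).card < (Finset.range m).card := by
    simpa using Finset.card_image_le.trans_lt (by simpa using h)
  obtain ⟨k, hk, hkf⟩ := Finset.exists_mem_notMem_of_card_lt_card hcard
  exact ⟨k, Finset.mem_range.1 hk, fun i hi => hkf (Finset.mem_image.2 ⟨i, Finset.mem_univ _, hi⟩)⟩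

lemma Set.Finite.exists_subset_range_fin [Nonempty V] {s : Set V} (hs : s.Finite) {t : ℕ}
    (h : s.ncard ≤ t) : ∃ u : Fin t → V, s ⊆ Set.range u := by
  classical
  set l := hs.toFinset.toList
  have hl : l.length = s.ncard := by
    rw [Finset.length_toList, Set.ncard_eq_toFinset_card s hs]
  refine ⟨fun j => l.getD j (Classical.arbitrary V), fun x hx => ?_⟩
  obtain ⟨i, hi, rfl⟩ := List.getElem_of_mem (show x ∈ l by simpa [l] using hx)
  exact ⟨⟨i, by omega⟩, List.getD_eq_getElem _ _ hi⟩

namespace SimpleGraph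

lemma Dominating.mono {G : SimpleGraph V} {D E : Set V} (hD : G.Dominating D) (hDE : D ⊆ E) :
    G.Dominating E := fun v =>
  let ⟨u, hu, huv⟩ := hD v
  ⟨u, hDE hu, huv⟩

lemma TotalDominating.dominating {G : SimpleGraph V} {D : Set V} (hD : G.TotalDominating D) :
    G.Dominating D := fun v =>
  let ⟨u, hu, huv⟩ := hD v
  ⟨u, hu, Or.inr huv⟩

end SimpleGraph

namespace prodCompleteGraphs

variable {t : ℕ} {n : Fin t → ℕ}

lemma not_adj_of_apply_eq {a b : ∀ i, Fin (n i)} {i : Fin t} (h : a i = b i) :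
    ¬(prodCompleteGraphs n).Adj a b :=
  fun hab => hab.2 i h

lemma adj_of_forall_ne [Nonempty (Fin t)] {a b : ∀ i, Fin (n i)} (h : ∀ i, a i ≠ b i) :
    (prodCompleteGraphs n).Adj a b :=
  ⟨fun hab => h (Classical.arbitrary _) (congrFun hab _), h⟩

def diagonal (hn : ∀ i, t + 1 ≤ n i) (k : Fin (t + 1)) : ∀ i, Fin (n i) :=
  fun i => ⟨k, k.2.trans_le (hn i)⟩

lemma diagonal_injective [Nonempty (Fin t)] (hn : ∀ i, t + 1 ≤ n i) :
    Function.Injective (diagonal hn) := fun k l hkl =>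
  Fin.ext (congrArg Fin.val (congrFun hkl (Classical.arbitrary (Fin t))) :)

lemma totalDominating_range_diagonal [Nonempty (Fin t)] (hn : ∀ i, t + 1 ≤ n i) :
    (prodCompleteGraphs n).TotalDominating (Set.range (diagonal hn)) := by
  intro v
  obtain ⟨k, hk, hkv⟩ := exists_lt_forall_ne (fun i => (v i : ℕ)) (Nat.lt_succ_self t)
  exact ⟨diagonal hn ⟨k, hk⟩, Set.mem_range_self _,
    adj_of_forall_ne fun i h => hkv i (congrArg Fin.val h).symm⟩

lemma not_dominating_range (ht : 2 ≤ t) (hn : ∀ i, t < n i) (u : Fin t → ∀ i, Fin (n i)) :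
    ¬(prodCompleteGraphs n).Dominating (Set.range u) := by
  intro hD
  let v₀ : ∀ i, Fin (n i) := fun i => u i i
  by_cases hv₀u : ∃ j₀, u j₀ = v₀
  · obtain ⟨j₀, hj₀⟩ := hv₀u
    obtain ⟨c, hc, huc⟩ := exists_lt_forall_ne (fun j => (u j j₀ : ℕ)) (hn j₀)
    have hv : ∀ j ≠ j₀, Function.update v₀ j₀ ⟨c, hc⟩ j = v₀ j :=
      fun j hj => Function.update_of_ne hj _ _
    obtain ⟨_, ⟨j, rfl⟩, huv⟩ := hD (Function.update v₀ j₀ ⟨c, hc⟩)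
    rcases huv with huv | huv
    · exact huc j (by rw [huv, Function.update_self])
    · by_cases hj : j = j₀
      · have : Nontrivial (Fin t) := Fin.nontrivial_iff_two_le.2 ht
        obtain ⟨i, hi⟩ := exists_ne j₀
        subst hj
        exact not_adj_of_apply_eq (i := i) (by rw [hv i hi, hj₀]) huv
      · exact not_adj_of_apply_eq (a := u j) (i := j) (hv j hj).symm huv
  · push Not at hv₀u
    obtain ⟨_, ⟨j, rfl⟩, huv⟩ := hD v₀
    rcases huv with huv | huv
    · exact hv₀u j huv
    · exact not_adj_of_apply_eq (a := u j) (b := v₀) (i := j) rfl huv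

lemma le_ncard_of_dominating (ht : 2 ≤ t) (hn : ∀ i, t < n i) {D : Set (∀ i, Fin (n i))}
    (hD : (prodCompleteGraphs n).Dominating D) : t + 1 ≤ D.ncard := by
  by_contra! hD_card
  have : Nonempty (∀ i, Fin (n i)) := ⟨fun i => ⟨0, t.zero_le.trans_lt (hn i)⟩⟩
  obtain ⟨u, hu⟩ := D.toFinite.exists_subset_range_fin (Nat.lt_succ_iff.1 hD_card)
  exact not_dominating_range ht hn u (hD.mono hu)

end prodCompleteGraphs

theorem stmt1 {t : ℕ} (ht : 3 ≤ t) (n : Fin t → ℕ) (hn : ∀ i, t + 1 ≤ n i) :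
    (prodCompleteGraphs n).domNum = t + 1 ∧ (prodCompleteGraphs n).totalDomNum = t + 1 := by
  have : Nonempty (Fin t) := ⟨⟨0, by omega⟩⟩
  have hD := prodCompleteGraphs.totalDominating_range_diagonal hn
  have hD_card : (Set.range (prodCompleteGraphs.diagonal hn)).ncard = t + 1 := by
    rw [Set.ncard_range_of_injective (prodCompleteGraphs.diagonal_injective hn),
      Nat.card_eq_fintype_card, Fintype.card_fin]
  have hlower : ∀ E, (prodCompleteGraphs n).Dominating E → t + 1 ≤ E.ncard :=
    fun E hE => prodCompleteGraphs.le_ncard_of_dominating (by omega) hn hE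
  exact ⟨IsLeast.csInf_eq ⟨⟨_, hD.dominating, hD_card⟩,
      by rintro _ ⟨E, hE, rfl⟩; exact hlower E hE⟩,
    IsLeast.csInf_eq ⟨⟨_, hD, hD_card⟩, by rintro _ ⟨E, hE, rfl⟩; exact hlower E hE.dominating⟩⟩
end

section
/- Let G and H be connected graphs without isolated vertices, and let G' be obtained from G by adding a new vertex v' attached by a single edge to some vertex v of G. Then γ_pr(G' × H) ≤ 2(γ_pr(G × H) + γ_pr(H)). -/
set_option linter.unusedVariables false
set_option linter.unnecessarySeqFocus false

open SimpleGraph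

variable {V : Type*} {W : Type*}

/-!
Let `D` be a minimum paired dominating set of `G × H`, `E` one of `H`, `p` the partner map of a
perfect matching of `E`, and `v'` the pendant vertex. Then
`D ∪ ({v} × E) ∪ {(v', p e) | e ∈ E, (v, e) ∉ D}` is a paired dominating set of `G' × H`:
`D` keeps its own matching and dominates the copy of `G × H`, each new vertex `(v, e)` is matched
with `(v', p e)`, and `{v} × E` dominates `{v'} × H` because `E` totally dominates `H`.
It has at most `|D| + 2|E|` vertices, so even `γ_pr(G' × H) ≤ γ_pr(G × H) + 2 γ_pr(H)`.
-/

namespace SimpleGraph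

variable {α : Type*} (G : SimpleGraph α)

/-- A perfect matching of `G.induce S`, encoded by its partner map (arbitrary off `S`). -/
def IsPairing (S : Set α) (f : α → α) : Prop :=
  ∀ x ∈ S, f x ∈ S ∧ f (f x) = x ∧ G.Adj x (f x)

variable {G}

theorem exists_isPerfectMatching_induce_iff {S : Set α} :
    (∃ M : (G.induce S).Subgraph, M.IsPerfectMatching) ↔ ∃ f, G.IsPairing S f := by
  classical
  constructor
  · rintro ⟨M, hM⟩
    rw [Subgraph.isPerfectMatching_iff] at hM
    choose f hf huniq using hM
    refine ⟨fun x => if hx : x ∈ S then f ⟨x, hx⟩ else x, fun x hx => ?_⟩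
    have hfx : f (f ⟨x, hx⟩) = ⟨x, hx⟩ := (huniq _ _ (M.adj_symm (hf _))).symm
    simp only [dif_pos hx, Subtype.coe_prop, Subtype.coe_eta, hfx]
    exact ⟨trivial, rfl, M.adj_sub (hf ⟨x, hx⟩)⟩
  · rintro ⟨f, hf⟩
    refine ⟨⟨Set.univ, fun x y => y.1 = f x.1, ?_, fun _ => trivial, ?_⟩, ?_, fun _ => trivial⟩
    · rintro x ⟨y, hy⟩ (rfl : y = f x)
      exact (hf x.1 x.2).2.2
    · constructor
      rintro x ⟨y, hy⟩ (rfl : y = f x)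
      exact ((hf x.1 x.2).2.1).symm
    · intro x _
      exact ⟨⟨f x.1, (hf x.1 x.2).1⟩, rfl, fun y hy => Subtype.ext hy⟩

theorem Subgraph.IsMatching.exists_isPairing {M : G.Subgraph} (hM : M.IsMatching) :
    ∃ f, G.IsPairing M.verts f := by
  have hM' : ∀ x ∈ M.verts, ∃! y, M.Adj x y := fun x hx => hM hx
  choose! f hf huniq using hM'
  refine ⟨f, fun x hx => ⟨M.edge_vert (hf x hx).symm, ?_, M.adj_sub (hf x hx)⟩⟩
  exact (huniq _ (M.edge_vert (hf x hx).symm) x (hf x hx).symm).symm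

theorem PairedDominating.totalDominating {D : Set α} (hD : G.PairedDominating D) :
    G.TotalDominating D := by
  obtain ⟨f, hf⟩ := exists_isPerfectMatching_induce_iff.mp hD.2
  intro x
  obtain ⟨u, hu, rfl | hadj⟩ := hD.1 x
  · exact ⟨f u, (hf u hu).1, (hf u hu).2.2.symm⟩
  · exact ⟨u, hu, hadj⟩

/-- The vertex set of a maximal matching is a paired dominating set. -/
theorem NoIsolated.exists_pairedDominating [Finite α] (hG : G.NoIsolated) :
    ∃ D, G.PairedDominating D := by
  obtain ⟨M, -, hM, hMmax⟩ := Finite.exists_le_maximal (p := Subgraph.IsMatching (G := G))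
    (a := ⊥) fun _ hv => absurd hv (by simp)
  refine ⟨M.verts, fun x => ?_, exists_isPerfectMatching_induce_iff.mpr hM.exists_isPairing⟩
  by_contra! hundom
  obtain ⟨y, hxy⟩ := hG x
  have hy : y ∉ M.verts := fun hy => (hundom y hy).2 hxy
  have hx : x ∉ M.verts := fun hx => (hundom x hx).1 rfl
  have hdisj : Disjoint M.support (G.subgraphOfAdj hxy).support := by
    refine Set.disjoint_of_subset M.support_subset_verts (Subgraph.support_subset_verts _) ?_
    simp [hx, hy]
  have hle := hMmax (hM.sup (.subgraphOfAdj hxy) hdisj) le_sup_left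
  exact hx (hle.1 (by simp))

theorem exists_pairedDominating_ncard_eq_pairedDomNum [Finite α] (hG : G.NoIsolated) :
    ∃ D, G.PairedDominating D ∧ D.ncard = G.pairedDomNum := by
  obtain ⟨D, hD⟩ := hG.exists_pairedDominating
  exact Nat.sInf_mem (s := {n | ∃ D : Set α, G.PairedDominating D ∧ D.ncard = n}) ⟨_, D, hD, rfl⟩

theorem pairedDomNum_le_ncard {D : Set α} (hD : G.PairedDominating D) :
    G.pairedDomNum ≤ D.ncard :=
  Nat.sInf_le ⟨D, hD, rfl⟩

theorem NoIsolated.tensor {β : Type*} {H : SimpleGraph β} (hG : G.NoIsolated)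
    (hH : H.NoIsolated) : (G.tensor H).NoIsolated := by
  rintro ⟨a, b⟩
  obtain ⟨a', ha⟩ := hG a
  obtain ⟨b', hb⟩ := hH b
  exact ⟨(a', b'), ha, hb⟩

end SimpleGraph

section Pendant

variable {V W : Type*}

def addPendantSet (D : Set (V × W)) (E : Set W) (v : V) (p : W → W) : Set (Option V × W) :=
  {x | match x with
    | (some a, w) => (a, w) ∈ D ∨ (a = v ∧ w ∈ E)
    | (none, w) => w ∈ E ∧ (v, p w) ∉ D}

open scoped Classical in
noncomputable def addPendantPairing (D : Set (V × W)) (v : V) (g : V × W → V × W) (p : W → W) :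
    Option V × W → Option V × W
  | (some a, w) => if (a, w) ∈ D then (some (g (a, w)).1, (g (a, w)).2) else (none, p w)
  | (none, w) => (some v, p w)

variable {G : SimpleGraph V} {H : SimpleGraph W} {D : Set (V × W)} {E : Set W} {v : V}
  {g : V × W → V × W} {p : W → W}

theorem addPendantPairing_none (w : W) :
    addPendantPairing D v g p (none, w) = (some v, p w) := rfl

theorem addPendantPairing_some_of_mem {a : V} {w : W} (h : (a, w) ∈ D) :
    addPendantPairing D v g p (some a, w) = (some (g (a, w)).1, (g (a, w)).2) := if_pos h

theorem addPendantPairing_some_of_notMem {a : V} {w : W} (h : (a, w) ∉ D) :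
    addPendantPairing D v g p (some a, w) = (none, p w) := if_neg h

theorem isPairing_addPendantPairing (hg : (G.tensor H).IsPairing D g) (hp : H.IsPairing E p) :
    ((addPendant G v).tensor H).IsPairing (addPendantSet D E v p) (addPendantPairing D v g p) := by
  rintro ⟨a | a, w⟩ hx
  · obtain ⟨hw, hvw⟩ := hx
    obtain ⟨hpw, hppw, hadj⟩ := hp w hw
    rw [addPendantPairing_none, addPendantPairing_some_of_notMem hvw, hppw]
    exact ⟨Or.inr ⟨rfl, hpw⟩, rfl, rfl, hadj⟩
  by_cases haw : (a, w) ∈ D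
  · obtain ⟨hgD, hgg, hadj⟩ := hg _ haw
    rw [addPendantPairing_some_of_mem haw, addPendantPairing_some_of_mem hgD, hgg]
    exact ⟨Or.inl hgD, rfl, hadj⟩
  · obtain ⟨rfl, hw⟩ := hx.resolve_left haw
    obtain ⟨hpw, hppw, hadj⟩ := hp w hw
    rw [addPendantPairing_some_of_notMem haw, addPendantPairing_none, hppw]
    exact ⟨⟨hpw, by rwa [hppw]⟩, rfl, rfl, hadj⟩

theorem dominating_addPendantSet (hD : (G.tensor H).Dominating D) (hE : H.TotalDominating E) :
    ((addPendant G v).tensor H).Dominating (addPendantSet D E v p) := by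
  rintro ⟨_ | a, w⟩
  · obtain ⟨e, he, hadj⟩ := hE w
    exact ⟨(some v, e), Or.inr ⟨rfl, he⟩, Or.inr ⟨rfl, hadj⟩⟩
  · obtain ⟨d, hd, rfl | hadj⟩ := hD (a, w)
    · exact ⟨(some a, w), Or.inl hd, Or.inl rfl⟩
    · exact ⟨(some d.1, d.2), Or.inl hd, Or.inr hadj⟩

theorem ncard_addPendantSet_le [Finite V] [Finite W] :
    (addPendantSet D E v p).ncard ≤ D.ncard + 2 * E.ncard := by
  have hsub : addPendantSet D E v p ⊆
      (fun x : V × W => (some x.1, x.2)) '' D ∪ (some v, ·) '' E ∪ (none, ·) '' E := by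
    rintro ⟨a | a, w⟩ hx
    · exact Or.inr ⟨w, hx.1, rfl⟩
    · rcases hx with haw | ⟨rfl, hw⟩
      · exact Or.inl (Or.inl ⟨(a, w), haw, rfl⟩)
      · exact Or.inl (Or.inr ⟨w, hw, rfl⟩)
  grw [Set.ncard_le_ncard hsub, Set.ncard_union_le, Set.ncard_union_le,
    Set.ncard_image_le (Set.toFinite D), Set.ncard_image_le (Set.toFinite E),
    Set.ncard_image_le (Set.toFinite E)]
  omega

end Pendant

theorem stmt3_general {V W : Type*} [Fintype V] [Fintype W] (G : SimpleGraph V) (H : SimpleGraph W)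
    (hG : G.NoIsolated) (hH : H.NoIsolated) (v : V) :
    ((addPendant G v).tensor H).pairedDomNum ≤
      2 * ((G.tensor H).pairedDomNum + H.pairedDomNum) := by
  obtain ⟨D, hD, hDcard⟩ := exists_pairedDominating_ncard_eq_pairedDomNum (hG.tensor hH)
  obtain ⟨E, hE, hEcard⟩ := exists_pairedDominating_ncard_eq_pairedDomNum hH
  obtain ⟨g, hg⟩ := exists_isPerfectMatching_induce_iff.mp hD.2
  obtain ⟨p, hp⟩ := exists_isPerfectMatching_induce_iff.mp hE.2
  have hS : ((addPendant G v).tensor H).PairedDominating (addPendantSet D E v p) :=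
    ⟨dominating_addPendantSet hD.1 hE.totalDominating,
      exists_isPerfectMatching_induce_iff.mpr ⟨_, isPairing_addPendantPairing hg hp⟩⟩
  calc ((addPendant G v).tensor H).pairedDomNum
      ≤ (addPendantSet D E v p).ncard := pairedDomNum_le_ncard hS
    _ ≤ D.ncard + 2 * E.ncard := ncard_addPendantSet_le
    _ ≤ 2 * ((G.tensor H).pairedDomNum + H.pairedDomNum) := by omega

theorem stmt3 {V W : Type*} [Fintype V] [Fintype W] (G : SimpleGraph V) (H : SimpleGraph W)
    (hGc : G.Connected) (hHc : H.Connected) (hG : G.NoIsolated) (hH : H.NoIsolated) (v : V) :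
    ((addPendant G v).tensor H).pairedDomNum ≤
      2 * ((G.tensor H).pairedDomNum + H.pairedDomNum) :=
  stmt3_general G H hG hH v
end

section
/- For any graphs G and H, ρ_3(G × H) ≥ ρ_3(G)·ρ_3(H): the 3-packing number of the direct product is at least the product of the 3-packing numbers. -/
set_option linter.unusedVariables false
set_option linter.unnecessarySeqFocus false

open SimpleGraph

variable {V : Type*} {W : Type*}

/-!
Both projections of `G.tensor H` are graph homomorphisms, so they do not increase distances.
Two distinct vertices of `P ×ˢ Q` differ in some coordinate, and there they are more than
3 apart, hence also in the product.
-/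

namespace SimpleGraph

section Distance

variable {V' : Type*} {G : SimpleGraph V} {G' : SimpleGraph V'} {u v : V}

theorem edist_map_le (f : G →g G') : G'.edist (f u) (f v) ≤ G.edist u v := by
  by_cases h : G.Reachable u v
  · obtain ⟨w, hw⟩ := h.exists_walk_length_eq_edist
    simpa [← hw] using edist_le (w.map f)
  · simp [edist_eq_top_of_not_reachable h]

theorem not_reachable_or_lt_dist_iff {k : ℕ} :
    ¬G.Reachable u v ∨ k < G.dist u v ↔ (k : ℕ∞) < G.edist u v := by
  by_cases h : G.Reachable u v
  · simp [h, ← h.coe_dist_eq_edist]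
  · simp [h, edist_eq_top_of_not_reachable h]

end Distance

section Tensor

variable (G : SimpleGraph V) (H : SimpleGraph W)

def tensorFst : G.tensor H →g G := ⟨Prod.fst, And.left⟩

def tensorSnd : G.tensor H →g H := ⟨Prod.snd, And.right⟩

variable {G H}

theorem Packing3.tensor {P : Set V} {Q : Set W} (hP : G.Packing3 P) (hQ : H.Packing3 Q) :
    (G.tensor H).Packing3 (P ×ˢ Q) := by
  rintro ⟨u₁, u₂⟩ ⟨hu₁, hu₂⟩ ⟨v₁, v₂⟩ ⟨hv₁, hv₂⟩ hne
  rw [not_reachable_or_lt_dist_iff]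
  by_cases h₁ : u₁ = v₁
  · have h₂ : u₂ ≠ v₂ := fun h₂ => hne (by rw [h₁, h₂])
    exact (not_reachable_or_lt_dist_iff.mp (hQ hu₂ hv₂ h₂)).trans_le
      (edist_map_le (tensorSnd G H))
  · exact (not_reachable_or_lt_dist_iff.mp (hP hu₁ hv₁ h₁)).trans_le
      (edist_map_le (tensorFst G H))

end Tensor

section Finite

variable [Finite V] (G : SimpleGraph V)

theorem bddAbove_packing3_ncard : BddAbove {n | ∃ P : Set V, G.Packing3 P ∧ P.ncard = n} := by
  refine ⟨Nat.card V, ?_⟩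
  rintro n ⟨P, -, rfl⟩
  exact Set.ncard_le_card P

theorem Packing3.ncard_le_packNum3 {G : SimpleGraph V} {P : Set V} (hP : G.Packing3 P) :
    P.ncard ≤ G.packNum3 :=
  le_csSup G.bddAbove_packing3_ncard ⟨P, hP, rfl⟩

theorem exists_packing3_ncard_eq_packNum3 : ∃ P : Set V, G.Packing3 P ∧ P.ncard = G.packNum3 :=
  Nat.sSup_mem (s := {n | ∃ P : Set V, G.Packing3 P ∧ P.ncard = n})
    ⟨0, ∅, Set.pairwise_empty _, Set.ncard_empty V⟩ G.bddAbove_packing3_ncard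

end Finite

end SimpleGraph

theorem stmt6 {V W : Type*} [Fintype V] [Fintype W] (G : SimpleGraph V) (H : SimpleGraph W) :
    G.packNum3 * H.packNum3 ≤ (G.tensor H).packNum3 := by
  obtain ⟨P, hP, hPcard⟩ := G.exists_packing3_ncard_eq_packNum3
  obtain ⟨Q, hQ, hQcard⟩ := H.exists_packing3_ncard_eq_packNum3
  calc G.packNum3 * H.packNum3 = (P ×ˢ Q).ncard := by rw [Set.ncard_prod, hPcard, hQcard]
    _ ≤ (G.tensor H).packNum3 := (hP.tensor hQ).ncard_le_packNum3
end

section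
/- Let G be a graph on n vertices and let G' be formed by attaching to each vertex of G a new path on 2 vertices via a bridge (i.e., for each v ∈ V(G) add new vertices x_v, y_v with edges v–y_v and y_v–x_v). Then γ_pr(G') = 2n and ρ_3(G') = n. -/
set_option linter.unusedVariables false
set_option linter.unnecessarySeqFocus false

open SimpleGraph

variable {V : Type*} {W : Type*}

/-!
Every vertex `v` of `G` carries the pendant path `(v, 0) – (v, 1) – (v, 2)`. A paired dominating
set contains a vertex of this path dominating the leaf `(v, 2)`, and the partner of that vertex is
again on the path; so it meets every path twice, and the non-root vertices of all paths, matched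
along the paths, show that this is attained. Dually, the vertices of one path are pairwise at
distance at most 2, so a 3-packing meets every path at most once, while any two leaves are at
distance at least 5.
-/

theorem mul_card_le_ncard_of_le_ncard_fiber {α β : Type*} [Finite α] [Fintype β] (f : α → β)
    (s : Set α) (k : ℕ) (h : ∀ b, k ≤ {a ∈ s | f a = b}.ncard) :
    k * Fintype.card β ≤ s.ncard := by
  classical
  have := Fintype.ofFinite α
  rw [Set.ncard_eq_toFinset_card']
  refine Finset.mul_card_image_le_card_of_maps_to (f := f) (t := Finset.univ)
    (fun _ _ => Finset.mem_univ _) k fun b _ => ?_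
  convert h b using 1
  rw [Set.ncard_eq_toFinset_card']
  congr 1
  ext a
  simp

theorem SimpleGraph.Walk.apply_le_apply_add_length {G : SimpleGraph V} (f : V → ℕ)
    (hf : ∀ ⦃p q⦄, G.Adj p q → f p ≤ f q + 1) {p q : V} (w : G.Walk p q) :
    f p ≤ f q + w.length := by
  induction w with
  | nil => simp
  | cons h _ ih =>
    rw [Walk.length_cons]
    linarith [hf h]

section attachPaths2

variable {G : SimpleGraph V}

theorem attachPaths2_adj_iff {p q : V × Fin 3} :
    (attachPaths2 G).Adj p q ↔ (p.2 = 0 ∧ q.2 = 0 ∧ G.Adj p.1 q.1) ∨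
      (p.1 = q.1 ∧ ((p.2 : ℕ) + 1 = q.2 ∨ (q.2 : ℕ) + 1 = p.2)) := by
  obtain ⟨a, i⟩ := p
  obtain ⟨b, j⟩ := q
  change _ ∨ _ ↔ _
  fin_cases i <;> fin_cases j <;> simp

theorem attachPaths2_fst_eq_of_adj {p q : V × Fin 3} (h : (attachPaths2 G).Adj p q)
    (hp : p.2 ≠ 0) : p.1 = q.1 := by
  rcases attachPaths2_adj_iff.mp h with ⟨hp0, -⟩ | ⟨hpq, -⟩
  · exact absurd hp0 hp
  · exact hpq

theorem attachPaths2_exists_walk_length_le_two (v : V) (i j : Fin 3) :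
    ∃ w : (attachPaths2 G).Walk (v, i) (v, j), w.length ≤ 2 := by
  have toMiddle : ∀ i : Fin 3, ∃ w : (attachPaths2 G).Walk (v, i) (v, 1), w.length ≤ 1 := by
    intro i
    by_cases hi : i = 1
    · subst hi
      exact ⟨.nil, by simp⟩
    · have hadj : (attachPaths2 G).Adj (v, i) (v, 1) := by
        rw [attachPaths2_adj_iff]
        fin_cases i <;> simp_all
      exact ⟨hadj.toWalk, by simp⟩
  obtain ⟨wi, hwi⟩ := toMiddle i
  obtain ⟨wj, hwj⟩ := toMiddle j
  exact ⟨wi.append wj.reverse, by simp; omega⟩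

open Classical in
/-- The distance from `p` to `(w, 2)` when `G` is complete, a lower bound for it in general. -/
noncomputable def tipPotential (w : V) (p : V × Fin 3) : ℕ :=
  if p.1 = w then 2 - (p.2 : ℕ) else 3 + (p.2 : ℕ)

theorem tipPotential_le_of_adj (w : V) {p q : V × Fin 3} (h : (attachPaths2 G).Adj p q) :
    tipPotential w p ≤ tipPotential w q + 1 := by
  rcases attachPaths2_adj_iff.mp h with ⟨hp, hq, hpq⟩ | ⟨hpq, hlevel⟩
  · have := G.ne_of_adj hpq
    unfold tipPotential
    split_ifs <;> simp_all
  · unfold tipPotential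
    rw [hpq]
    split_ifs <;> omega

theorem attachPaths2_five_le_dist {a b : V} (hab : a ≠ b)
    (hr : (attachPaths2 G).Reachable (a, 2) (b, 2)) :
    5 ≤ (attachPaths2 G).dist (a, 2) (b, 2) := by
  obtain ⟨w, hw⟩ := hr.exists_walk_length_eq_dist
  have := w.apply_le_apply_add_length (tipPotential b) fun _ _ => tipPotential_le_of_adj b
  simp [tipPotential, hab] at this
  omega

theorem attachPaths2_packing3_injOn_fst {P : Set (V × Fin 3)}
    (hP : (attachPaths2 G).Packing3 P) : Set.InjOn Prod.fst P := by
  rintro ⟨a, i⟩ hp ⟨b, j⟩ hq (rfl : a = b)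
  by_contra hne
  obtain ⟨w, hw⟩ := attachPaths2_exists_walk_length_le_two (G := G) a i j
  rcases hP hp hq hne with hr | hd
  · exact hr w.reachable
  · linarith [dist_le w]

theorem attachPaths2_packing3_tips : (attachPaths2 G).Packing3 (Set.range fun v => (v, 2)) := by
  rintro _ ⟨a, rfl⟩ _ ⟨b, rfl⟩ hne
  have hab : a ≠ b := fun h => hne (h ▸ rfl)
  by_cases hr : (attachPaths2 G).Reachable (a, 2) (b, 2)
  · exact Or.inr ((by norm_num : 3 < 5).trans_le (attachPaths2_five_le_dist hab hr))
  · exact Or.inl hr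

theorem attachPaths2_isGreatest_packing3_ncard [Fintype V] :
    IsGreatest {n | ∃ P, (attachPaths2 G).Packing3 P ∧ P.ncard = n} (Fintype.card V) := by
  refine ⟨⟨_, attachPaths2_packing3_tips, ?_⟩, ?_⟩
  · rw [Set.ncard_range_of_injective fun a b h => (Prod.mk.inj h).1, Nat.card_eq_fintype_card]
  · rintro _ ⟨P, hP, rfl⟩
    calc P.ncard = (Prod.fst '' P).ncard := (attachPaths2_packing3_injOn_fst hP).ncard_image.symm
      _ ≤ (Set.univ : Set V).ncard := Set.ncard_le_ncard (Set.subset_univ _)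
      _ = Fintype.card V := by rw [Set.ncard_univ, Nat.card_eq_fintype_card]

theorem attachPaths2_pairedDominating_fiber_nontrivial {D : Set (V × Fin 3)}
    (hD : (attachPaths2 G).PairedDominating D) (v : V) : {p ∈ D | p.1 = v}.Nontrivial := by
  obtain ⟨hdom, M, hM⟩ := hD
  obtain ⟨u, huD, hu⟩ := hdom (v, 2)
  have ⟨hu1, hu2⟩ : u.1 = v ∧ u.2 ≠ 0 := by
    rcases hu with rfl | hadj
    · simp
    · rcases attachPaths2_adj_iff.mp hadj with ⟨-, h, -⟩ | ⟨h, hlevel⟩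
      · simp at h
      · exact ⟨h, fun h0 => by simp [h0] at hlevel⟩
  obtain ⟨w, hw, -⟩ := hM.1 (hM.2 ⟨u, huD⟩)
  have hadj : (attachPaths2 G).Adj u w := M.adj_sub hw
  exact ⟨u, ⟨huD, hu1⟩, w, ⟨w.2, (attachPaths2_fst_eq_of_adj hadj hu2).symm.trans hu1⟩, hadj.ne⟩

theorem attachPaths2_pairedDominating_setOf_snd_ne_zero :
    (attachPaths2 G).PairedDominating {p | p.2 ≠ 0} := by
  refine ⟨fun ⟨v, i⟩ => ⟨(v, 1), by simp, ?_⟩, ⊤, ?_⟩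
  · by_cases hi : i = 1
    · exact Or.inl (by rw [hi])
    · right
      rw [attachPaths2_adj_iff]
      fin_cases i <;> simp_all
  · rw [Subgraph.isPerfectMatching_iff]
    rintro ⟨⟨v, i⟩, hi⟩
    simp only [Subgraph.top_adj, comap_adj, Function.Embedding.subtype_apply]
    fin_cases i
    · exact absurd rfl hi
    · refine ⟨⟨(v, 2), by simp⟩, by simp [attachPaths2_adj_iff], ?_⟩
      rintro ⟨⟨b, j⟩, hj⟩ h
      rw [Set.mem_ofPred_eq] at hj
      fin_cases j <;> simp_all [attachPaths2_adj_iff]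
    · refine ⟨⟨(v, 1), by simp⟩, by simp [attachPaths2_adj_iff], ?_⟩
      rintro ⟨⟨b, j⟩, hj⟩ h
      rw [Set.mem_ofPred_eq] at hj
      fin_cases j <;> simp_all [attachPaths2_adj_iff]

theorem ncard_setOf_snd_ne_zero [Fintype V] :
    {p : V × Fin 3 | p.2 ≠ 0}.ncard = 2 * Fintype.card V := by
  have : {p : V × Fin 3 | p.2 ≠ 0} = Set.univ ×ˢ {0}ᶜ := by ext; simp
  rw [this, Set.ncard_prod, Set.ncard_univ, Nat.card_eq_fintype_card, Set.ncard_compl]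
  simp [mul_comm]

theorem attachPaths2_isLeast_pairedDominating_ncard [Fintype V] :
    IsLeast {n | ∃ D, (attachPaths2 G).PairedDominating D ∧ D.ncard = n}
      (2 * Fintype.card V) := by
  refine ⟨⟨_, attachPaths2_pairedDominating_setOf_snd_ne_zero, ncard_setOf_snd_ne_zero⟩, ?_⟩
  rintro _ ⟨D, hD, rfl⟩
  exact mul_card_le_ncard_of_le_ncard_fiber Prod.fst D 2 fun v =>
    Set.one_lt_ncard_iff_nontrivial.mpr (attachPaths2_pairedDominating_fiber_nontrivial hD v)

end attachPaths2

theorem stmt10 {V : Type*} [Fintype V] (G : SimpleGraph V) :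
    (attachPaths2 G).pairedDomNum = 2 * Fintype.card V ∧
      (attachPaths2 G).packNum3 = Fintype.card V :=
  ⟨attachPaths2_isLeast_pairedDominating_ncard.csInf_eq,
    attachPaths2_isGreatest_packing3_ncard.csSup_eq⟩
end
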